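/- arXiv:1605.09177 — 2 statements merged into one kernel-verified Lean document; each statement's English description precedes it below -/
import Mathlib

section
/- Open induction on Cantor space: let U be a subset of Cantor space (the space of functions from ℕ to Bool, equipped with the product topology, where Bool carries the discrete topology) that is open, and let Cantor space be ordered by the lexicographic order induced by the order false < true on Bool. If U is progressive, i.e., for every α in Cantor space, whenever every β lexicographically strictly below α belongs to U it follows that α belongs to U, then every element of Cantor space belongs to U. -/
/-- The lexicographic strict order on sequences `ℕ → X`: `α` is lexicographically
strictly below `β` if they agree before some index `n` and `α n < β n`. -/
def LexLt {X : Type*} [LT X] (α β : ℕ → X) : Prop :=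
  ∃ n : ℕ, (∀ m : ℕ, m < n → α m = β m) ∧ α n < β n

open Classical in
/-- The greedy "lexicographically least" sequence of a set `C`. -/
noncomputable def lsq (C : Set (ℕ → Bool)) : ℕ → Bool
  | n => if ∃ x ∈ C, (∀ m, m < n → x m = lsq C m) ∧ x n = false then false else true

open Classical in
lemma lsq_false_of {C : Set (ℕ → Bool)} {n : ℕ}
    (h : ∃ x ∈ C, (∀ m, m < n → x m = lsq C m) ∧ x n = false) : lsq C n = false := by
  rw [lsq]; exact if_pos h

open Classical in
lemma lsq_true_of {C : Set (ℕ → Bool)} {n : ℕ}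
    (h : ¬ ∃ x ∈ C, (∀ m, m < n → x m = lsq C m) ∧ x n = false) : lsq C n = true := by
  rw [lsq]; exact if_neg h

lemma lsq_approx (C : Set (ℕ → Bool)) (hne : C.Nonempty) :
    ∀ n, ∃ x ∈ C, ∀ m, m < n → x m = lsq C m := by
  intro n
  induction n with
  | zero => exact ⟨hne.choose, hne.choose_spec, fun m hm => absurd hm (Nat.not_lt_zero m)⟩
  | succ k ih =>
    by_cases h : ∃ x ∈ C, (∀ m, m < k → x m = lsq C m) ∧ x k = false
    · obtain ⟨x, hxC, hx, hxk⟩ := h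
      refine ⟨x, hxC, fun m hm => ?_⟩
      rcases Nat.lt_succ_iff_lt_or_eq.mp hm with hm | hm
      · exact hx m hm
      · subst hm; rw [hxk, lsq_false_of ⟨x, hxC, hx, hxk⟩]
    · obtain ⟨x, hxC, hx⟩ := ih
      refine ⟨x, hxC, fun m hm => ?_⟩
      rcases Nat.lt_succ_iff_lt_or_eq.mp hm with hm | hm
      · exact hx m hm
      · subst hm
        have hxk : x m = true := by
          by_contra hxk
          exact h ⟨x, hxC, hx, Bool.not_eq_true _ ▸ hxk⟩
        rw [hxk, lsq_true_of h]

lemma lsq_mem (C : Set (ℕ → Bool)) (hC : IsClosed C) (hne : C.Nonempty) : lsq C ∈ C := by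
  choose x hxC hx using lsq_approx C hne
  have htend : Filter.Tendsto x Filter.atTop (nhds (lsq C)) := by
    rw [tendsto_pi_nhds]
    intro i
    refine Filter.Tendsto.congr' ?_ (tendsto_const_nhds (x := lsq C i))
    filter_upwards [Filter.eventually_ge_atTop (i + 1)] with n hn
    exact (hx n i (Nat.lt_of_succ_le hn)).symm
  exact hC.mem_of_tendsto htend (Filter.Eventually.of_forall hxC)

lemma lsq_min (C : Set (ℕ → Bool)) (β : ℕ → Bool) (hβ : LexLt β (lsq C)) : β ∉ C := by
  intro hβC
  obtain ⟨n, hagree, hlt⟩ := hβ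
  obtain ⟨hβn, hln⟩ := Bool.lt_iff.mp hlt
  have : lsq C n = false := lsq_false_of ⟨β, hβC, hagree, hβn⟩
  simp_all

/-- Open induction on Cantor space: if `U ⊆ ℕ → Bool` is open in the product topology
(`Bool` discrete) and progressive with respect to the lexicographic order induced by
`false < true`, then `U` is the whole space. -/
theorem open_induction_cantor (U : Set (ℕ → Bool)) (hU : IsOpen U)
    (hprog : ∀ α : ℕ → Bool, (∀ β : ℕ → Bool, LexLt β α → β ∈ U) → α ∈ U) :
    ∀ α : ℕ → Bool, α ∈ U := by
  by_contra h
  push_neg at h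
  have hne : Uᶜ.Nonempty := h
  have hmem : lsq Uᶜ ∈ Uᶜ := lsq_mem Uᶜ hU.isClosed_compl hne
  exact hmem (hprog _ (fun β hβ => by
    by_contra hβU
    exact lsq_min Uᶜ β hβ hβU))
end

section
/- Open induction on Baire space: let U be a subset of Baire space (the space of functions from ℕ to ℕ, equipped with the product topology, where ℕ carries the discrete topology) that is open, and let Baire space be ordered by the lexicographic order induced by the usual order on ℕ. If U is progressive, i.e., for every α in Baire space, whenever every β lexicographically strictly below α belongs to U it follows that α belongs to U, then every element of Baire space belongs to U. -/
/-- The leftmost branch of a set `C` of sequences. -/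
noncomputable def lmBranch (C : Set (ℕ → ℕ)) (n : ℕ) : ℕ :=
  sInf {k | ∃ γ ∈ C, (∀ m, ∀ _ : m < n, γ m = lmBranch C m) ∧ γ n = k}
termination_by n
decreasing_by assumption

lemma lmBranch_approx (C : Set (ℕ → ℕ)) (hC : C.Nonempty) :
    ∀ n, ∃ γ ∈ C, ∀ m, m < n → γ m = lmBranch C m := by
  intro n
  induction n with
  | zero => obtain ⟨γ, hγ⟩ := hC; exact ⟨γ, hγ, fun m hm => absurd hm (Nat.not_lt_zero m)⟩
  | succ n ih =>
    obtain ⟨γ, hγC, hγ⟩ := ih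
    have hne : {k | ∃ δ ∈ C, (∀ m, ∀ _ : m < n, δ m = lmBranch C m) ∧ δ n = k}.Nonempty :=
      ⟨γ n, γ, hγC, fun m hm => hγ m hm, rfl⟩
    have hmem := Nat.sInf_mem hne
    rw [← lmBranch] at hmem
    obtain ⟨δ, hδC, hδ, hδn⟩ := hmem
    exact ⟨δ, hδC, fun m hm => by
      rcases Nat.lt_succ_iff_lt_or_eq.mp hm with h | h
      · exact hδ m h
      · rw [h]; exact hδn⟩

/-- Open induction on Baire space: if `U ⊆ ℕ → ℕ` is open in the product topology
(`ℕ` discrete) and progressive with respect to the lexicographic order induced by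
the usual order on `ℕ`, then `U` is the whole space. -/
theorem open_induction_baire (U : Set (ℕ → ℕ)) (hU : IsOpen U)
    (hprog : ∀ α : ℕ → ℕ, (∀ β : ℕ → ℕ, LexLt β α → β ∈ U) → α ∈ U) :
    ∀ α : ℕ → ℕ, α ∈ U := by
  by_contra h
  push_neg at h
  set C := Uᶜ with hCdef
  have hC : C.Nonempty := h
  set α := lmBranch C with hα
  -- α is in C
  have hαC : α ∈ C := by
    by_contra hαU
    have hαU : α ∈ U := not_not.mp hαU
    obtain ⟨I, u, hu, hsub⟩ := isOpen_pi_iff.mp hU α hαU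
    set N := if hI : I.Nonempty then (I.max' hI) + 1 else 0 with hN
    obtain ⟨γ, hγC, hγ⟩ := lmBranch_approx C hC N
    have hγU : γ ∈ U := by
      apply hsub
      intro i hi
      have hiN : i < N := by
        have hIne : I.Nonempty := ⟨i, hi⟩
        rw [hN, dif_pos hIne]
        exact Nat.lt_succ_of_le (I.le_max' i hi)
      rw [hγ i hiN]
      exact (hu i hi).2
    exact hγC hγU
  -- α is lex-minimal in C
  have hmin : ∀ β ∈ C, ¬ LexLt β α := by
    rintro β hβ ⟨n, hagree, hlt⟩
    have : sInf {k | ∃ γ ∈ C, (∀ m, ∀ _ : m < n, γ m = lmBranch C m) ∧ γ n = k} ≤ β n :=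
      Nat.sInf_le ⟨β, hβ, fun m hm => hagree m hm, rfl⟩
    rw [← lmBranch] at this
    exact absurd hlt (not_lt.mpr this)
  exact hαC (hprog α fun β hβ => by
    by_contra hβU
    exact hmin β hβU hβ)
end
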